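/- arXiv:1905.01667 — 6 statements merged into one kernel-verified Lean document; each statement's English description precedes it below -/
import Mathlib

section
/- Let a > 0, T > 0 and c ∈ (0, T). Let y : (0, ∞) → [0, ∞) be a Lebesgue measurable function with ∫₀^∞ y(r) dr < ∞ which satisfies y(t) − y(s) ≤ a ∫ₛᵗ y(r) dr for all 0 < s ≤ t < T. Then for almost every t ∈ [c, T) one has y(t) ≤ exp(∫₀^T y(r) dr) · ( c⁻¹ ∫₀^T y(r) dr + a² c ). -/
/-! With `I = ∫₀ᵀ y`, the hypothesis gives `y t - a I ≤ y s` for `0 < s ≤ t < T`. Averaging over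
`s ∈ (t - c, t]` yields `y t ≤ I / c + a I` for every `t ∈ [c, T)`, and
`I / c + a I ≤ e^I (I / c + a² c)` by AM-GM (`a I ≤ I² / c + a² c`) and `1 + I ≤ e^I`. -/

open MeasureTheory Set

section

variable {y : ℝ → ℝ} {a T : ℝ}

theorem integral_le_integral_zero_of_nonneg (hy_nonneg : ∀ t ∈ Ioc 0 T, 0 ≤ y t)
    (hy_int : IntervalIntegrable y volume 0 T) {s t : ℝ} (hs : 0 ≤ s) (hst : s ≤ t)
    (ht : t ≤ T) : ∫ r in s..t, y r ≤ ∫ r in (0:ℝ)..T, y r :=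
  intervalIntegral.integral_mono_interval hs hst ht
    (ae_restrict_of_forall_mem measurableSet_Ioc hy_nonneg) hy_int

theorem sub_mul_integral_le_of_sub_le_mul_integral (ha : 0 ≤ a)
    (hy_nonneg : ∀ t ∈ Ioc 0 T, 0 ≤ y t) (hy_int : IntervalIntegrable y volume 0 T)
    (hineq : ∀ s t : ℝ, 0 < s → s ≤ t → t < T → y t - y s ≤ a * ∫ r in s..t, y r)
    {s t : ℝ} (hs : 0 < s) (hst : s ≤ t) (ht : t < T) :
    y t - a * ∫ r in (0:ℝ)..T, y r ≤ y s := by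
  have h := integral_le_integral_zero_of_nonneg hy_nonneg hy_int hs.le hst ht.le
  nlinarith [hineq s t hs hst ht, mul_le_mul_of_nonneg_left h ha]

theorem le_inv_mul_integral_add_mul_integral (ha : 0 ≤ a) {c : ℝ} (hc : 0 < c)
    (hy_nonneg : ∀ t ∈ Ioc 0 T, 0 ≤ y t) (hy_int : IntervalIntegrable y volume 0 T)
    (hineq : ∀ s t : ℝ, 0 < s → s ≤ t → t < T → y t - y s ≤ a * ∫ r in s..t, y r)
    {t : ℝ} (ht : t ∈ Ico c T) :
    y t ≤ c⁻¹ * (∫ r in (0:ℝ)..T, y r) + a * ∫ r in (0:ℝ)..T, y r := by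
  set I := ∫ r in (0:ℝ)..T, y r
  obtain ⟨hct, htT⟩ := ht
  have h0 : 0 ≤ t - c := by linarith
  have hy_int' : IntervalIntegrable y volume (t - c) t :=
    hy_int.mono_set (by
      rw [uIcc_of_le (by linarith), uIcc_of_le (by linarith)]
      exact Icc_subset_Icc h0 htT.le)
  have havg : c * (y t - a * I) ≤ ∫ s in (t - c)..t, y s := by
    have := intervalIntegral.integral_mono_on_of_le_Ioo (by linarith) intervalIntegrable_const
      hy_int' fun s hs => sub_mul_integral_le_of_sub_le_mul_integral ha hy_nonneg hy_int hineq
        (h0.trans_lt hs.1) hs.2.le htT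
    rwa [intervalIntegral.integral_const, smul_eq_mul, sub_sub_cancel] at this
  have hle := integral_le_integral_zero_of_nonneg hy_nonneg hy_int h0 (by linarith) htT.le
  have : y t - a * I ≤ c⁻¹ * I := by
    rw [le_inv_mul_iff₀ hc]
    linarith
  linarith

end

theorem inv_mul_add_mul_le_exp_mul {I c : ℝ} (hI : 0 ≤ I) (hc : 0 < c) (a : ℝ) :
    c⁻¹ * I + a * I ≤ Real.exp I * (c⁻¹ * I + a ^ 2 * c) := by
  have hamgm : a * I ≤ c⁻¹ * I ^ 2 + a ^ 2 * c := by
    have h : a * I ≤ c⁻¹ * (I ^ 2 + (a * c) ^ 2) := by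
      rw [le_inv_mul_iff₀ hc]
      nlinarith [sq_nonneg (I - a * c)]
    calc a * I ≤ c⁻¹ * (I ^ 2 + (a * c) ^ 2) := h
      _ = c⁻¹ * I ^ 2 + a ^ 2 * c := by field_simp
  have hexp : 1 ≤ Real.exp I := Real.one_le_exp hI
  calc c⁻¹ * I + a * I ≤ (I + 1) * (c⁻¹ * I) + a ^ 2 * c := by nlinarith
    _ ≤ Real.exp I * (c⁻¹ * I) + Real.exp I * (a ^ 2 * c) :=
      add_le_add (mul_le_mul_of_nonneg_right (Real.add_one_le_exp I) (by positivity))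
        (le_mul_of_one_le_left (by positivity) hexp)
    _ = Real.exp I * (c⁻¹ * I + a ^ 2 * c) := by ring

theorem stmt_0_general (a T c : ℝ) (ha : 0 < a) (hc : c ∈ Set.Ioo 0 T)
    (y : ℝ → ℝ) (hy_meas : Measurable y)
    (hy_nonneg : ∀ t ∈ Set.Ioi (0:ℝ), 0 ≤ y t)
    (hy_int : ∫⁻ r in Set.Ioi (0:ℝ), ENNReal.ofReal (y r) < ⊤)
    (hineq : ∀ s t : ℝ, 0 < s → s ≤ t → t < T →
      y t - y s ≤ a * ∫ r in s..t, y r) :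
    ∀ᵐ t ∂(volume.restrict (Set.Ico c T)),
      y t ≤ Real.exp (∫ r in (0:ℝ)..T, y r) *
        (c⁻¹ * (∫ r in (0:ℝ)..T, y r) + a ^ 2 * c) := by
  obtain ⟨hc0, hcT⟩ := hc
  have hT : 0 ≤ T := (hc0.trans hcT).le
  have hy_nonneg' : ∀ t ∈ Ioc 0 T, 0 ≤ y t := fun t ht => hy_nonneg t ht.1
  have hy_int' : IntervalIntegrable y volume 0 T := by
    have hIoi : IntegrableOn y (Ioi 0) :=
      (lintegral_ofReal_ne_top_iff_integrable hy_meas.aestronglyMeasurable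
        (ae_restrict_of_forall_mem measurableSet_Ioi hy_nonneg)).1 hy_int.ne
    exact (intervalIntegrable_iff_integrableOn_Ioc_of_le hT).2
      (hIoi.mono_set Ioc_subset_Ioi_self)
  have hI : 0 ≤ ∫ r in (0:ℝ)..T, y r := by
    rw [intervalIntegral.integral_of_le hT]
    exact setIntegral_nonneg measurableSet_Ioc hy_nonneg'
  refine ae_restrict_of_forall_mem measurableSet_Ico fun t ht => ?_
  exact (le_inv_mul_integral_add_mul_integral ha.le hc0 hy_nonneg' hy_int' hineq ht).trans
    (inv_mul_add_mul_le_exp_mul hI hc0 a)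

/-- Lemma 8.3 (first part): if `y : (0,∞) → [0,∞)` is measurable with finite integral and
satisfies `y t - y s ≤ a ∫ₛᵗ y` for `0 < s ≤ t < T`, then a.e. on `[c,T)` one has the bound
`y t ≤ exp(∫₀ᵀ y) (c⁻¹ ∫₀ᵀ y + a² c)`. -/
theorem stmt_0 (a T c : ℝ) (ha : 0 < a) (hT : 0 < T) (hc : c ∈ Set.Ioo 0 T)
    (y : ℝ → ℝ) (hy_meas : Measurable y)
    (hy_nonneg : ∀ t ∈ Set.Ioi (0:ℝ), 0 ≤ y t)
    (hy_int : ∫⁻ r in Set.Ioi (0:ℝ), ENNReal.ofReal (y r) < ⊤)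
    (hineq : ∀ s t : ℝ, 0 < s → s ≤ t → t < T →
      y t - y s ≤ a * ∫ r in s..t, y r) :
    ∀ᵐ t ∂(volume.restrict (Set.Ico c T)),
      y t ≤ Real.exp (∫ r in (0:ℝ)..T, y r) *
        (c⁻¹ * (∫ r in (0:ℝ)..T, y r) + a ^ 2 * c) :=
  stmt_0_general a T c ha hc y hy_meas hy_nonneg hy_int hineq
end

section
/- Let a > 0 and let y : (0, ∞) → [0, ∞) be a Lebesgue measurable function with ∫₀^∞ y(r) dr < ∞ which satisfies y(t) − y(s) ≤ a ∫ₛᵗ y(r) dr for all 0 < s ≤ t < ∞. Then y(t) → 0 as t → ∞. -/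
open MeasureTheory
open scoped ENNReal

/-- Lemma 8.3 (second part): if `y : (0,∞) → [0,∞)` is measurable with finite integral and
satisfies `y t - y s ≤ a ∫ₛᵗ y` for all `0 < s ≤ t < ∞`, then `y t → 0` as `t → ∞`. -/
theorem stmt_1 (a : ℝ) (ha : 0 < a)
    (y : ℝ → ℝ) (hy_meas : Measurable y)
    (hy_nonneg : ∀ t ∈ Set.Ioi (0:ℝ), 0 ≤ y t)
    (hy_int : ∫⁻ r in Set.Ioi (0:ℝ), ENNReal.ofReal (y r) < ⊤)
    (hineq : ∀ s t : ℝ, 0 < s → s ≤ t →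
      y t - y s ≤ a * ∫ r in s..t, y r) :
    Filter.Tendsto y Filter.atTop (nhds 0) := by
  rw [Metric.tendsto_atTop]
  intro ε hε
  have hεa : 0 < ε / (2 * a) := by positivity
  set f : ℝ → ℝ≥0∞ := fun r => ENNReal.ofReal (y r) with hf
  have hfm : Measurable f := hy_meas.ennreal_ofReal
  set ν : Measure ℝ := volume.withDensity f with hν
  have hνapp : ∀ s : Set ℝ, MeasurableSet s → ν s = ∫⁻ r in s, f r := fun s hs =>
    withDensity_apply f hs
  have hν0 : ν (Set.Ioi (0:ℝ)) < ⊤ := by rw [hνapp _ measurableSet_Ioi]; exact hy_int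
  have hiInter : (⋂ n : ℕ, Set.Ioi ((n:ℝ))) = ∅ := by
    ext x
    simp only [Set.mem_iInter, Set.mem_Ioi, Set.mem_empty_iff_false, iff_false, not_forall,
      not_lt]
    obtain ⟨n, hn⟩ := exists_nat_gt x
    exact ⟨n, hn.le⟩
  have htail : Filter.Tendsto (fun n : ℕ => ν (Set.Ioi (n:ℝ))) Filter.atTop (nhds 0) := by
    have h := tendsto_measure_iInter_atTop (μ := ν) (s := fun n : ℕ => Set.Ioi ((n:ℝ)))
      (fun n => measurableSet_Ioi.nullMeasurableSet)
      (fun m n hmn => Set.Ioi_subset_Ioi (by exact_mod_cast hmn))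
      ⟨1, ((measure_mono (Set.Ioi_subset_Ioi (by norm_num))).trans_lt hν0).ne⟩
    rwa [hiInter, measure_empty] at h
  have hev : ∀ᶠ n : ℕ in Filter.atTop, ν (Set.Ioi (n:ℝ)) < ENNReal.ofReal (ε / (2 * a)) :=
    htail.eventually_lt_const (ENNReal.ofReal_pos.mpr hεa)
  obtain ⟨n, hn⟩ := hev.exists
  have hnT : ν (Set.Ioi (n:ℝ)) ≠ ⊤ := hn.trans_le le_top |>.ne
  have hTpos : (0:ℝ) < (n:ℝ) + 1 := by positivity
  obtain ⟨s, hs1, hs2⟩ : ∃ s : ℝ, (n:ℝ) + 1 ≤ s ∧ y s < ε / 2 := by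
    by_contra h
    push_neg at h
    have h1 : ∫⁻ r in Set.Ioi ((n:ℝ)+1), ENNReal.ofReal (ε/2)
        ≤ ∫⁻ r in Set.Ioi ((n:ℝ)+1), f r := by
      refine lintegral_mono_ae ?_
      filter_upwards [ae_restrict_mem measurableSet_Ioi] with r hr
      exact ENNReal.ofReal_le_ofReal (h r (Set.mem_Ioi.mp hr).le)
    have h2 : ∫⁻ r in Set.Ioi ((n:ℝ)+1), ENNReal.ofReal (ε/2) = ⊤ := by
      rw [setLIntegral_const, Real.volume_Ioi,
        ENNReal.mul_top (ENNReal.ofReal_pos.mpr (by linarith)).ne']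
    have h3 : ν (Set.Ioi ((n:ℝ)+1)) = ⊤ := by
      rw [hνapp _ measurableSet_Ioi]
      exact top_le_iff.mp (h2 ▸ h1)
    have h4 : ν (Set.Ioi ((n:ℝ)+1)) ≤ ν (Set.Ioi (n:ℝ)) :=
      measure_mono (Set.Ioi_subset_Ioi (by linarith))
    exact hnT (top_le_iff.mp (h3 ▸ h4))
  refine ⟨s, fun t ht => ?_⟩
  have hspos : 0 < s := lt_of_lt_of_le hTpos hs1
  have htpos : 0 < t := lt_of_lt_of_le hspos ht
  have hInt : ∫ r in s..t, y r ≤ ε / (2 * a) := by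
    have hle : ∫ r in s..t, y r = (∫⁻ r in Set.Ioc s t, f r).toReal := by
      rw [intervalIntegral.integral_of_le ht,
        integral_eq_lintegral_of_nonneg_ae ?_ hy_meas.aestronglyMeasurable.restrict]
      filter_upwards [ae_restrict_mem measurableSet_Ioc] with r hr
      exact hy_nonneg r (Set.mem_Ioi.mpr (lt_of_lt_of_le hspos hr.1.le))
    have hsub : Set.Ioc s t ⊆ Set.Ioi ((n:ℝ)) := fun r hr =>
      Set.mem_Ioi.mpr (by have := hr.1; linarith)
    have h3 : (∫⁻ r in Set.Ioc s t, f r) ≤ ν (Set.Ioi (n:ℝ)) := by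
      rw [hνapp _ measurableSet_Ioi]
      exact lintegral_mono_set hsub
    have h4 : (ν (Set.Ioi (n:ℝ))).toReal < ε / (2 * a) :=
      ENNReal.toReal_lt_of_lt_ofReal hn
    calc ∫ r in s..t, y r = (∫⁻ r in Set.Ioc s t, f r).toReal := hle
      _ ≤ (ν (Set.Ioi (n:ℝ))).toReal := ENNReal.toReal_mono hnT h3
      _ ≤ ε / (2 * a) := h4.le
  have key := hineq s t hspos ht
  have h5 : a * (∫ r in s..t, y r) ≤ a * (ε / (2 * a)) :=
    mul_le_mul_of_nonneg_left hInt ha.le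
  have h6 : a * (ε / (2 * a)) = ε / 2 := by field_simp
  rw [Real.dist_eq, sub_zero, abs_of_nonneg (hy_nonneg t (Set.mem_Ioi.mpr htpos))]
  nlinarith [h5, h6, key, hs2]
end

section
/- Let a > 0 and let y : (0, ∞) → [0, ∞) be a Lebesgue measurable function with ∫₀^∞ y(r) dr < ∞ which satisfies y(t) − y(s) ≤ a ∫ₛᵗ y(r) dr for all 0 < s ≤ t < ∞. Then for every δ > 0 one has sup_{t ≥ δ} y(t) < ∞. -/
/-!
Since `y` is integrable, on `(0, δ]` it drops below its mean value at some point `s`. From `s`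
onwards the integral inequality bounds `y t` by `y s` plus `|a|` times the total integral of `y`.
-/

open MeasureTheory Set

theorem intervalIntegral_le_integral_Ioi_of_nonneg {y : ℝ → ℝ} {c s t : ℝ}
    (hint : IntegrableOn y (Ioi c)) (hnonneg : ∀ r ∈ Ioi c, 0 ≤ y r) (hcs : c ≤ s) (hst : s ≤ t) :
    ∫ r in s..t, y r ≤ ∫ r in Ioi c, y r := by
  rw [intervalIntegral.integral_of_le hst]
  refine setIntegral_mono_set hint ?_ ?_
  · filter_upwards [ae_restrict_mem measurableSet_Ioi] with r hr using hnonneg r hr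
  · exact (Ioc_subset_Ioi_self.trans (Ioi_subset_Ioi hcs)).eventuallyLE

theorem le_add_abs_mul_integral_Ioi {a : ℝ} {y : ℝ → ℝ}
    (hint : IntegrableOn y (Ioi 0)) (hnonneg : ∀ r ∈ Ioi 0, 0 ≤ y r) {s t : ℝ}
    (hs : 0 < s) (hst : s ≤ t) (hineq : y t - y s ≤ a * ∫ r in s..t, y r) :
    y t ≤ y s + |a| * ∫ r in Ioi 0, y r := by
  have hJ_nonneg : 0 ≤ ∫ r in s..t, y r :=
    intervalIntegral.integral_nonneg hst fun r hr => hnonneg r (hs.trans_le hr.1)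
  have hJ_le := intervalIntegral_le_integral_Ioi_of_nonneg hint hnonneg hs.le hst
  have : a * ∫ r in s..t, y r ≤ |a| * ∫ r in Ioi 0, y r :=
    (mul_le_mul_of_nonneg_right (le_abs_self a) hJ_nonneg).trans
      (mul_le_mul_of_nonneg_left hJ_le (abs_nonneg a))
  linarith

theorem stmt_2_general (a : ℝ)
    (y : ℝ → ℝ) (hy_meas : Measurable y)
    (hy_nonneg : ∀ t ∈ Set.Ioi (0:ℝ), 0 ≤ y t)
    (hy_int : ∫⁻ r in Set.Ioi (0:ℝ), ENNReal.ofReal (y r) < ⊤)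
    (hineq : ∀ s t : ℝ, 0 < s → s ≤ t →
      y t - y s ≤ a * ∫ r in s..t, y r) :
    ∀ δ : ℝ, 0 < δ → ∃ M : ℝ, ∀ t : ℝ, δ ≤ t → y t ≤ M := by
  intro δ hδ
  have hint : IntegrableOn y (Ioi 0) :=
    (lintegral_ofReal_ne_top_iff_integrable hy_meas.aestronglyMeasurable
      (ae_restrict_of_forall_mem measurableSet_Ioi hy_nonneg)).1 hy_int.ne
  obtain ⟨s, ⟨hs, hsδ⟩, hys⟩ := exists_le_setAverage (s := Ioc 0 δ) (μ := volume) (f := y)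
    (by simp [hδ]) (by simp) (hint.mono_set Ioc_subset_Ioi_self)
  refine ⟨(⨍ r in Ioc 0 δ, y r) + |a| * ∫ r in Ioi 0, y r, fun t ht => ?_⟩
  have hst : s ≤ t := hsδ.trans ht
  linarith [le_add_abs_mul_integral_Ioi hint hy_nonneg hs hst (hineq s t hs hst)]

/-- If `y : (0,∞) → [0,∞)` is measurable with finite integral and satisfies
`y t - y s ≤ a ∫ₛᵗ y` for all `0 < s ≤ t < ∞`, then for every `δ > 0`,
`sup_{t ≥ δ} y t < ∞`. -/
theorem stmt_2 (a : ℝ) (ha : 0 < a)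
    (y : ℝ → ℝ) (hy_meas : Measurable y)
    (hy_nonneg : ∀ t ∈ Set.Ioi (0:ℝ), 0 ≤ y t)
    (hy_int : ∫⁻ r in Set.Ioi (0:ℝ), ENNReal.ofReal (y r) < ⊤)
    (hineq : ∀ s t : ℝ, 0 < s → s ≤ t →
      y t - y s ≤ a * ∫ r in s..t, y r) :
    ∀ δ : ℝ, 0 < δ → ∃ M : ℝ, ∀ t : ℝ, δ ≤ t → y t ≤ M :=
  stmt_2_general a y hy_meas hy_nonneg hy_int hineq
end

section
/- Let a > 0, c > 0, δ > 0 and β > 0, and let y : (0, ∞) → [0, ∞) be a Lebesgue measurable function which satisfies y(t) − y(s) ≤ a ∫ₛᵗ y(r) dr for all 0 < s ≤ t < ∞, and such that y(r) ≤ c for every r ≥ δ. Set T = β/(4ac). If t₀ ≥ δ + T and y(t₀) ≥ β/2, then y(t) ≥ β/4 for every t ∈ [t₀ − T, t₀]. -/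
open MeasureTheory

/-- If `y : (0,∞) → [0,∞)` is measurable, satisfies `y t - y s ≤ a ∫ₛᵗ y` for all
`0 < s ≤ t < ∞`, and `y r ≤ c` for `r ≥ δ`, then with `T = β/(4ac)`: whenever `t₀ ≥ δ + T`
and `y t₀ ≥ β/2`, one has `y t ≥ β/4` for every `t ∈ [t₀ - T, t₀]`. -/
theorem stmt_3 (a c δ β : ℝ) (ha : 0 < a) (hc : 0 < c) (hδ : 0 < δ) (hβ : 0 < β)
    (y : ℝ → ℝ) (hy_meas : Measurable y)
    (hy_nonneg : ∀ t ∈ Set.Ioi (0:ℝ), 0 ≤ y t)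
    (hineq : ∀ s t : ℝ, 0 < s → s ≤ t →
      y t - y s ≤ a * ∫ r in s..t, y r)
    (hbd : ∀ r : ℝ, δ ≤ r → y r ≤ c)
    (T : ℝ) (hT : T = β / (4 * a * c))
    (t₀ : ℝ) (ht₀ : δ + T ≤ t₀) (hy₀ : β / 2 ≤ y t₀) :
    ∀ t ∈ Set.Icc (t₀ - T) t₀, β / 4 ≤ y t := by
  intro t ht
  obtain ⟨ht1, ht2⟩ := ht
  have hTpos : 0 < T := by
    rw [hT]; positivity
  have hδt : δ ≤ t := by linarith
  have htpos : 0 < t := lt_of_lt_of_le hδ hδt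
  -- integrability of y on [t, t₀]
  have hint : IntervalIntegrable y volume t t₀ := by
    apply IntervalIntegrable.mono_fun (intervalIntegrable_const (c := c))
    · exact hy_meas.aestronglyMeasurable
    · rw [Filter.EventuallyLE, ae_restrict_iff' measurableSet_uIoc]
      filter_upwards with r hr
      rw [Set.uIoc_of_le ht2] at hr
      rw [Real.norm_eq_abs, Real.norm_eq_abs, abs_of_nonneg (hy_nonneg r (lt_trans htpos hr.1)),
        abs_of_pos hc]
      exact hbd r (le_trans hδt hr.1.le)
  -- bound the integral
  have hbound : (∫ r in t..t₀, y r) ≤ c * (t₀ - t) := by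
    calc (∫ r in t..t₀, y r) ≤ ∫ _ in t..t₀, c := by
          apply intervalIntegral.integral_mono_on ht2 hint (intervalIntegrable_const)
          intro x hx
          exact hbd x (le_trans hδt hx.1)
      _ = c * (t₀ - t) := by simp [mul_comm]
  have key := hineq t t₀ htpos ht2
  have hac : a * (c * (t₀ - t)) ≤ β / 4 := by
    have h1 : t₀ - t ≤ T := by linarith
    have h2 : a * c * T = β / 4 := by
      rw [hT]; field_simp
    nlinarith
  have : y t₀ - y t ≤ β / 4 := by
    calc y t₀ - y t ≤ a * ∫ r in t..t₀, y r := key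
      _ ≤ a * (c * (t₀ - t)) := by
          apply mul_le_mul_of_nonneg_left hbound ha.le
      _ ≤ β / 4 := hac
  linarith
end

section
/- Let T > 0, a > 0 and ε > 0 with 2ε < T. Let j : ℝ → [0, ∞) be a smooth function with support contained in (−1, 1) and ∫_ℝ j(t) dt = 1, and set j_ε(t) = ε⁻¹ j(t/ε). Let y : (0, T) → [0, ∞) be Lebesgue integrable and satisfy y(t) − y(s) ≤ a ∫ₛᵗ y(r) dr for all 0 < s ≤ t < T. Define ŷ_ε(t) = ∫_ℝ j_ε(t + ε − r) y(r) dr for t ∈ (0, T − 2ε) (all arguments t + ε − r occurring with j_ε(t + ε − r) ≠ 0 lie in (0, T)). Then ŷ_ε(t) − ŷ_ε(s) ≤ a ∫ₛᵗ ŷ_ε(r) dr for all 0 < s ≤ t < T − 2ε. -/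
open MeasureTheory

/-- The shifted time-mollification `ŷ_ε(t) = ∫ j_ε(t+ε-r) y(r) dr` of a function `y` on `(0,T)`
satisfying `y t - y s ≤ a ∫ₛᵗ y` for `0 < s ≤ t < T` satisfies the same integral inequality on
`(0, T - 2ε)`. -/
theorem stmt_4 (T a ε : ℝ) (hT : 0 < T) (ha : 0 < a) (hε : 0 < ε) (hεT : 2 * ε < T)
    (j : ℝ → ℝ) (hj_smooth : ContDiff ℝ (⊤ : ℕ∞) j) (hj_nonneg : ∀ t, 0 ≤ j t)
    (hj_supp : Function.support j ⊆ Set.Ioo (-1 : ℝ) 1)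
    (hj_int : (∫ t, j t) = 1)
    (y : ℝ → ℝ) (hy_int : IntegrableOn y (Set.Ioo 0 T))
    (hy_nonneg : ∀ t ∈ Set.Ioo (0:ℝ) T, 0 ≤ y t)
    (hineq : ∀ s t : ℝ, 0 < s → s ≤ t → t < T →
      y t - y s ≤ a * ∫ r in s..t, y r)
    (yhat : ℝ → ℝ)
    (hyhat : ∀ t : ℝ, yhat t = ∫ r, ε⁻¹ * j ((t + ε - r) / ε) * y r) :
    ∀ s t : ℝ, 0 < s → s ≤ t → t < T - 2 * ε →
      yhat t - yhat s ≤ a * ∫ r in s..t, yhat r := by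
  intro s t hs hst htT
  set z : ℝ → ℝ := (Set.Ioo (0:ℝ) T).indicator y with hz
  have hz_int : Integrable z := (integrable_indicator_iff measurableSet_Ioo).2 hy_int
  have hz_nonneg : ∀ u, 0 ≤ z u := by
    intro u
    rw [hz]
    by_cases hu : u ∈ Set.Ioo (0:ℝ) T
    · rw [Set.indicator_of_mem hu]; exact hy_nonneg u hu
    · rw [Set.indicator_of_notMem hu]
  set k : ℝ → ℝ := fun u => ε⁻¹ * j (u / ε) with hk
  have hk_cont : Continuous k := by
    rw [hk]; exact continuous_const.mul (hj_smooth.continuous.comp (continuous_id.div_const ε))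
  have hk_nonneg : ∀ u, 0 ≤ k u := fun u => mul_nonneg (by positivity) (hj_nonneg _)
  have hk_supp : ∀ u, k u ≠ 0 → u ∈ Set.Ioo (-ε) ε := by
    intro u hu
    have hj0 : j (u / ε) ≠ 0 := by
      intro h; apply hu; rw [hk]; simp [h]
    have hmem := hj_supp hj0
    constructor
    · have := hmem.1
      rw [lt_div_iff₀ hε] at this; linarith
    · have := hmem.2
      rw [div_lt_one hε] at this; linarith
  have hkCS : HasCompactSupport k := by
    apply HasCompactSupport.intro (isCompact_Icc (a := -ε) (b := ε))
    intro u hu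
    by_contra h
    exact hu (Set.Ioo_subset_Icc_self (hk_supp u h))
  obtain ⟨C, hC⟩ := hkCS.exists_bound_of_continuous hk_cont
  -- integrability of the basic integrands
  have hmul : ∀ c : ℝ, Integrable (fun u => k u * z (c + ε - u)) := by
    intro c
    exact (hz_int.comp_sub_left (c + ε)).bdd_mul hk_cont.aestronglyMeasurable (Filter.Eventually.of_forall hC)
  -- yhat equals the mollification of z
  have hY : ∀ c ∈ Set.Ioo (0:ℝ) (T - 2 * ε), yhat c = ∫ u, k u * z (c + ε - u) := by
    intro c hc
    rw [hyhat]
    have h1 : (fun r => ε⁻¹ * j ((c + ε - r) / ε) * y r) = fun r => k (c + ε - r) * z r := by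
      funext r
      by_cases hj0 : j ((c + ε - r) / ε) = 0
      · rw [hk, hz]; simp [hj0]
      · have hmem := hk_supp (c + ε - r) (by
          rw [hk]; exact mul_ne_zero (inv_ne_zero hε.ne') hj0)
        have hrT : r ∈ Set.Ioo (0:ℝ) T := by
          constructor
          · have := hmem.2; linarith [hc.1]
          · have := hmem.1; linarith [hc.2]
        rw [hk, hz, Set.indicator_of_mem hrT]
    rw [h1]
    have h2 : (fun r => k (c + ε - r) * z r)
        = fun r => (fun u => k u * z (c + ε - u)) (c + ε - r) := by
      funext r
      simp only
      congr 1
      congr 1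
      ring
    rw [h2]
    exact integral_sub_left_eq_self (fun u => k u * z (c + ε - u)) volume (c + ε)
  -- the averaged interval integral
  set φ : ℝ → ℝ := fun u => ∫ r in s..t, z (r + ε - u) with hφ
  have hφ_eq : ∀ u : ℝ, φ u = ∫ r in (s + (ε - u))..(t + (ε - u)), z r := by
    intro u
    rw [hφ]
    simp only [add_sub_assoc]
    exact intervalIntegral.integral_comp_add_right (fun r => z r) (ε - u)
  have hφ_cont : Continuous φ := by
    have hG : Continuous fun x : ℝ => ∫ r in (0:ℝ)..x, z r := hz_int.continuous_primitive 0
    have : φ = fun u => (∫ r in (0:ℝ)..(t + (ε - u)), z r)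
        - (∫ r in (0:ℝ)..(s + (ε - u)), z r) := by
      funext u
      rw [hφ_eq u]
      rw [intervalIntegral.integral_interval_sub_left hz_int.intervalIntegrable
        hz_int.intervalIntegrable]
    rw [this]
    have hc1 : Continuous fun u : ℝ => t + (ε - u) :=
      continuous_const.add (continuous_const.sub continuous_id)
    have hc2 : Continuous fun u : ℝ => s + (ε - u) :=
      continuous_const.add (continuous_const.sub continuous_id)
    exact ((hG.comp hc1).sub (hG.comp hc2))
  have hIφ : Integrable (fun u => k u * φ u) := by
    apply Continuous.integrable_of_hasCompactSupport (hk_cont.mul hφ_cont)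
    exact hkCS.mul_right
  -- pointwise key inequality
  have key : ∀ u, k u * z (t + ε - u) - k u * z (s + ε - u) ≤ a * (k u * φ u) := by
    intro u
    by_cases hku : k u = 0
    · simp [hku]
    · have hu := hk_supp u hku
      have hk0 : 0 ≤ k u := hk_nonneg u
      have hs' : 0 < s + ε - u := by have := hu.2; linarith
      have hle : s + ε - u ≤ t + ε - u := by linarith
      have ht' : t + ε - u < T := by have := hu.1; linarith
      have hy_ineq := hineq (s + ε - u) (t + ε - u) hs' hle ht'
      have hms : s + ε - u ∈ Set.Ioo (0:ℝ) T := ⟨hs', lt_of_le_of_lt hle ht'⟩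
      have hmt : t + ε - u ∈ Set.Ioo (0:ℝ) T := ⟨lt_of_lt_of_le hs' hle, ht'⟩
      have hzs : z (s + ε - u) = y (s + ε - u) := by
        rw [hz]; exact Set.indicator_of_mem hms y
      have hzt : z (t + ε - u) = y (t + ε - u) := by
        rw [hz]; exact Set.indicator_of_mem hmt y
      have hint_eq : (∫ r in (s + ε - u)..(t + ε - u), y r)
          = ∫ r in (s + ε - u)..(t + ε - u), z r := by
        apply intervalIntegral.integral_congr
        intro r hr
        rw [Set.uIcc_of_le hle] at hr
        rw [hz]
        have hmr : r ∈ Set.Ioo (0:ℝ) T :=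
          ⟨lt_of_lt_of_le hs' hr.1, lt_of_le_of_lt hr.2 ht'⟩
        exact (Set.indicator_of_mem hmr y).symm
      have hφu : φ u = ∫ r in (s + ε - u)..(t + ε - u), z r := by
        rw [hφ_eq u]
        congr 1 <;> ring
      have hzineq : z (t + ε - u) - z (s + ε - u) ≤ a * φ u := by
        rw [hzs, hzt, hφu, ← hint_eq]
        exact hy_ineq
      calc k u * z (t + ε - u) - k u * z (s + ε - u)
          = k u * (z (t + ε - u) - z (s + ε - u)) := by ring
        _ ≤ k u * (a * φ u) := mul_le_mul_of_nonneg_left hzineq hk0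
        _ = a * (k u * φ u) := by ring
  -- product integrability for Fubini
  have hAESM : AEStronglyMeasurable (fun p : ℝ × ℝ => k p.1 * z (p.2 + ε - p.1))
      ((volume : Measure ℝ).prod ((volume : Measure ℝ).restrict (Set.Ioc s t))) := by
    have hac : (volume : Measure ℝ).prod ((volume : Measure ℝ).restrict (Set.Ioc s t))
        ≪ (volume : Measure ℝ).prod (volume : Measure ℝ) :=
      Measure.AbsolutelyContinuous.prod (Measure.AbsolutelyContinuous.refl _)
        Measure.restrict_le_self.absolutelyContinuous
    refine AEStronglyMeasurable.mono_ac hac ?_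
    have h1 : AEStronglyMeasurable (fun x : ℝ => z (x + ε)) volume :=
      hz_int.aestronglyMeasurable.comp_quasiMeasurePreserving
        (measurePreserving_add_right volume ε).quasiMeasurePreserving
    have h2 : AEStronglyMeasurable (fun p : ℝ × ℝ => z (p.2 + ε))
        ((volume : Measure ℝ).prod (volume : Measure ℝ)) :=
      h1.comp_quasiMeasurePreserving Measure.quasiMeasurePreserving_snd
    have h3 := h2.comp_measurePreserving
      (measurePreserving_prod_sub (volume : Measure ℝ) (volume : Measure ℝ))
    have h4 : AEStronglyMeasurable (fun p : ℝ × ℝ => z (p.2 + ε - p.1))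
        ((volume : Measure ℝ).prod (volume : Measure ℝ)) := by
      have : (fun p : ℝ × ℝ => z (p.2 + ε - p.1))
          = fun p : ℝ × ℝ => z (p.2 - p.1 + ε) := by
        funext p; congr 1; ring
      rw [this]
      exact h3
    exact ((hk_cont.comp continuous_fst).aestronglyMeasurable).mul h4
  have H : Integrable (fun p : ℝ × ℝ => k p.1 * z (p.2 + ε - p.1))
      ((volume : Measure ℝ).prod ((volume : Measure ℝ).restrict (Set.Ioc s t))) := by
    rw [integrable_prod_iff hAESM]
    constructor
    · refine Filter.Eventually.of_forall fun u => ?_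
      have h0 : Integrable (fun r : ℝ => z (r + (ε - u))) volume :=
        hz_int.comp_add_right (ε - u)
      have h1 : Integrable (fun r : ℝ => k u * z (r + (ε - u)))
          ((volume : Measure ℝ).restrict (Set.Ioc s t)) :=
        (h0.const_mul (k u)).restrict
      simpa only [add_sub_assoc] using h1
    · have heq : (fun u => ∫ r in Set.Ioc s t, ‖k u * z (r + ε - u)‖) = fun u => k u * φ u := by
        funext u
        have h1 : (∫ r in Set.Ioc s t, ‖k u * z (r + ε - u)‖)
            = ∫ r in Set.Ioc s t, k u * z (r + ε - u) := by
          apply integral_congr_ae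
          refine Filter.Eventually.of_forall fun r => ?_
          show ‖k u * z (r + ε - u)‖ = k u * z (r + ε - u)
          rw [Real.norm_eq_abs, abs_of_nonneg (mul_nonneg (hk_nonneg u) (hz_nonneg _))]
        have h2 : φ u = ∫ r in Set.Ioc s t, z (r + ε - u) := by
          simp only [hφ]; rw [intervalIntegral.integral_of_le hst]
        rw [h1, integral_const_mul, h2]
      rw [heq]
      exact hIφ
  -- Fubini
  have hswap : (∫ u, k u * φ u) = ∫ r in Set.Ioc s t, ∫ u, k u * z (r + ε - u) := by
    have h1 : (fun u => k u * φ u)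
        = fun u => ∫ r in Set.Ioc s t, k u * z (r + ε - u) := by
      funext u
      have h2 : φ u = ∫ r in Set.Ioc s t, z (r + ε - u) := by
        simp only [hφ]; rw [intervalIntegral.integral_of_le hst]
      rw [h2, integral_const_mul]
    rw [h1]
    exact integral_integral_swap H
  -- conclude
  have hsIoo : s ∈ Set.Ioo (0:ℝ) (T - 2 * ε) := ⟨hs, lt_of_le_of_lt hst htT⟩
  have htIoo : t ∈ Set.Ioo (0:ℝ) (T - 2 * ε) := ⟨lt_of_lt_of_le hs hst, htT⟩
  rw [hY t htIoo, hY s hsIoo]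
  rw [← integral_sub (hmul t) (hmul s)]
  have hmono : (∫ u, (k u * z (t + ε - u) - k u * z (s + ε - u)))
      ≤ ∫ u, a * (k u * φ u) :=
    integral_mono ((hmul t).sub (hmul s)) (hIφ.const_mul a) key
  refine le_trans hmono (le_of_eq ?_)
  rw [integral_const_mul]
  congr 1
  rw [hswap, intervalIntegral.integral_of_le hst]
  apply setIntegral_congr_fun measurableSet_Ioc
  intro r hr
  exact (hY r ⟨lt_trans hs hr.1, lt_of_le_of_lt hr.2 htT⟩).symm
end

section
/- Let d ≥ 2, α ∈ (0, 1), let D ⊂ ℝ^d be a bounded measurable set, and let ĉ > 0. Let p : (0, ∞) × D × D → [0, ∞) be a measurable function satisfying p(t, x, y) ≤ ĉ · min{ t^{−d/(2α)}, t · |x − y|^{−(d+2α)} } for all t > 0 and x, y ∈ D. Then for every q ∈ [1, (d+2α)/d) and every T > 0, sup_{x ∈ D} ∫₀^T ( ∫_D p(t, x, y)^q dy )^{1/q} dt < ∞. -/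
/-!
Interpolating the two heat-kernel bounds, `min{A, B} ≤ A^(1-θ) B^θ`, gives
`p(t,x,y) ≤ ĉ t^β |x-y|^(-θ(d+2α))` with `β = θ - (1-θ) d/(2α)`. Since `q < (d+2α)/d`, `θ` can be
chosen so that simultaneously `θ(d+2α)q < d`, making `∫_D |x-y|^(-θ(d+2α)q) dy` bounded uniformly
in `x ∈ D`, and `β > -1`, making `t^β` integrable on `(0,T)`.
-/

open MeasureTheory ENNReal NNReal

namespace ENNReal

theorem min_le_rpow_mul_rpow (a b : ℝ≥0∞) {θ : ℝ} (hθ₀ : 0 ≤ θ) (hθ₁ : θ ≤ 1) :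
    min a b ≤ a ^ (1 - θ) * b ^ θ :=
  calc min a b = min a b ^ (1 - θ) * min a b ^ θ := by
        rw [← rpow_add_of_nonneg _ _ (by linarith) hθ₀, sub_add_cancel, rpow_one]
    _ ≤ a ^ (1 - θ) * b ^ θ := by
        gcongr
        exacts [min_le_left _ _, min_le_right _ _]

theorem min_rpow_mul_rpow_le {τ : ℝ≥0∞} (hτ₀ : τ ≠ 0) (hτ : τ ≠ ⊤) (ρ : ℝ≥0∞) (a b : ℝ)
    {θ : ℝ} (hθ₀ : 0 ≤ θ) (hθ₁ : θ ≤ 1) :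
    min (τ ^ a) (τ * ρ ^ b) ≤ τ ^ ((1 - θ) * a + θ) * ρ ^ (θ * b) := by
  refine (min_le_rpow_mul_rpow _ _ hθ₀ hθ₁).trans_eq ?_
  rw [← rpow_mul, mul_rpow_of_nonneg _ _ hθ₀, ← rpow_mul, ← mul_assoc,
    ← rpow_add _ _ hτ₀ hτ, mul_comm a, mul_comm b]

end ENNReal

theorem lintegral_rpow_one_div_le_of_le_mul {X : Type*} [MeasurableSpace X] {μ : Measure X}
    {s : Set X} (hs : MeasurableSet s) {f g : X → ℝ≥0∞} {c : ℝ≥0∞} (hc : c ≠ ⊤) {q : ℝ}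
    (hq : 0 < q) (hfg : ∀ y ∈ s, f y ≤ c * g y) :
    (∫⁻ y in s, f y ^ q ∂μ) ^ (1 / q) ≤ c * (∫⁻ y in s, g y ^ q ∂μ) ^ (1 / q) :=
  calc (∫⁻ y in s, f y ^ q ∂μ) ^ (1 / q) ≤ (∫⁻ y in s, c ^ q * g y ^ q ∂μ) ^ (1 / q) := by
        refine rpow_le_rpow (setLIntegral_mono' hs fun y hy ↦ ?_) (by positivity)
        rw [← mul_rpow_of_nonneg _ _ hq.le]
        exact rpow_le_rpow (hfg y hy) hq.le
    _ = c * (∫⁻ y in s, g y ^ q ∂μ) ^ (1 / q) := by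
        rw [lintegral_const_mul' _ _ (rpow_ne_top_of_nonneg hq.le hc),
          mul_rpow_of_nonneg _ _ (by positivity), ← ENNReal.rpow_mul, mul_one_div_cancel hq.ne',
          ENNReal.rpow_one]

theorem setLIntegral_Ioo_ofReal_rpow_lt_top {β T : ℝ} (hβ : -1 < β) (hT : 0 < T) :
    ∫⁻ t in Set.Ioo 0 T, ENNReal.ofReal t ^ β < ⊤ := by
  rw [setLIntegral_congr_fun measurableSet_Ioo fun t ht ↦ ofReal_rpow_of_pos ht.1]
  exact ((intervalIntegral.integrableOn_Ioo_rpow_iff hT).2 hβ).lintegral_lt_top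

section RieszPotential

variable {E : Type*} [NormedAddCommGroup E] [NormedSpace ℝ E] [FiniteDimensional ℝ E]
  [MeasurableSpace E] [BorelSpace E] {μ : Measure E} [μ.IsAddHaarMeasure]

theorem setLIntegral_enorm_rpow_lt_top (hE : 1 ≤ Module.finrank ℝ E) {r : ℝ}
    (hr : -(Module.finrank ℝ E : ℝ) < r) {s : Set E} (hs : Bornology.IsBounded s) :
    ∫⁻ z in s, ‖z‖ₑ ^ r ∂μ < ⊤ := by
  have : Nontrivial E := Module.nontrivial_of_finrank_pos (R := ℝ) (by omega)
  have hloc : LocallyIntegrable (fun z : E ↦ ‖z‖ ^ r) μ :=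
    locallyIntegrable_of_norm_le_rpow hE (α := -r) (by linarith) (C := 1)
      (ae_of_all _ fun z ↦ by rw [one_mul, neg_neg, Real.norm_of_nonneg (by positivity)])
      (continuous_norm.measurable.pow_const _).aestronglyMeasurable
  have hint := (hloc.integrableOn_isCompact hs.isCompact_closure).mono_set subset_closure
  refine lt_of_eq_of_lt (lintegral_congr_ae ?_) hint.hasFiniteIntegral
  filter_upwards [ae_restrict_of_ae (compl_mem_ae_iff.2 (measure_singleton (μ := μ) 0))]
    with z (hz : z ≠ 0)
  rw [Real.enorm_of_nonneg (by positivity), ← ENNReal.ofReal_rpow_of_pos (norm_pos_iff.2 hz),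
    ofReal_norm]

theorem exists_setLIntegral_enorm_sub_rpow_le (hE : 1 ≤ Module.finrank ℝ E) {r : ℝ}
    (hr : -(Module.finrank ℝ E : ℝ) < r) {s : Set E} (hs : Bornology.IsBounded s) :
    ∃ C < ⊤, ∀ x ∈ s, ∫⁻ y in s, ‖x - y‖ₑ ^ r ∂μ ≤ C := by
  obtain ⟨R, hR⟩ := hs.subset_closedBall 0
  refine ⟨_, setLIntegral_enorm_rpow_lt_top (μ := μ) hE hr (Metric.isBounded_closedBall (x := 0)
    (r := 2 * R)), fun x hx ↦ ?_⟩
  have hsub : s ⊆ Metric.closedBall x (2 * R) := fun y hy ↦ by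
    have hx' := Metric.mem_closedBall.1 (hR hx)
    have hy' := Metric.mem_closedBall.1 (hR hy)
    rw [Metric.mem_closedBall]
    linarith [dist_triangle_right y x 0]
  calc ∫⁻ y in s, ‖x - y‖ₑ ^ r ∂μ
      ≤ ∫⁻ y in Metric.closedBall x (2 * R), ‖x - y‖ₑ ^ r ∂μ := lintegral_mono_set hsub
    _ = ∫⁻ y, (Metric.closedBall 0 (2 * R)).indicator (‖·‖ₑ ^ r) (y - x) ∂μ := by
        rw [← lintegral_indicator Metric.isClosed_closedBall.measurableSet]
        refine lintegral_congr fun y ↦ ?_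
        have hmem : y ∈ Metric.closedBall x (2 * R) ↔ y - x ∈ Metric.closedBall 0 (2 * R) := by
          rw [mem_closedBall_iff_norm, mem_closedBall_zero_iff]
        classical
        rw [Set.indicator_apply, Set.indicator_apply, hmem, enorm_sub_rev]
    _ = ∫⁻ z in Metric.closedBall 0 (2 * R), ‖z‖ₑ ^ r ∂μ := by
        rw [lintegral_sub_right_eq_self,
          lintegral_indicator Metric.isClosed_closedBall.measurableSet]

end RieszPotential

theorem lintegral_rpow_one_div_le_of_le_min {E : Type*} [SeminormedAddCommGroup E]
    [MeasurableSpace E] {μ : Measure E} {D : Set E} (hD : MeasurableSet D) {f : E → ℝ≥0∞}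
    {c τ C : ℝ≥0∞} (hc : c ≠ ⊤) (hτ₀ : τ ≠ 0) (hτ : τ ≠ ⊤) {x : E} {a b θ q : ℝ}
    (hθ₀ : 0 ≤ θ) (hθ₁ : θ ≤ 1) (hq : 0 < q)
    (hf : ∀ y ∈ D, f y ≤ c * min (τ ^ a) (τ * ‖x - y‖ₑ ^ b))
    (hC : ∫⁻ y in D, ‖x - y‖ₑ ^ (θ * b * q) ∂μ ≤ C) :
    (∫⁻ y in D, f y ^ q ∂μ) ^ (1 / q) ≤ c * C ^ (1 / q) * τ ^ ((1 - θ) * a + θ) :=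
  calc (∫⁻ y in D, f y ^ q ∂μ) ^ (1 / q)
      ≤ (c * τ ^ ((1 - θ) * a + θ)) * (∫⁻ y in D, (‖x - y‖ₑ ^ (θ * b)) ^ q ∂μ) ^ (1 / q) := by
        refine lintegral_rpow_one_div_le_of_le_mul hD
          (mul_ne_top hc (rpow_ne_top_of_ne_zero hτ₀ hτ)) hq fun y hy ↦ (hf y hy).trans ?_
        rw [mul_assoc]
        gcongr
        exact min_rpow_mul_rpow_le hτ₀ hτ _ _ _ hθ₀ hθ₁
    _ ≤ c * C ^ (1 / q) * τ ^ ((1 - θ) * a + θ) := by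
        simp_rw [← ENNReal.rpow_mul]
        rw [mul_right_comm]
        gcongr

theorem exists_interpolation_exponent {d α q : ℝ} (hα : 0 < α) (hαd : 2 * α < d) (hq : 1 ≤ q)
    (hqd : q * d < d + 2 * α) :
    ∃ θ, 0 ≤ θ ∧ θ ≤ 1 ∧ -1 < (1 - θ) * (-d / (2 * α)) + θ ∧ -d < θ * -(d + 2 * α) * q := by
  have hd : 0 < d := by linarith
  have hgap : (d - 2 * α) * q < d := by nlinarith
  obtain ⟨θ, hθ_lo, hθ_hi⟩ : ∃ θ, (d - 2 * α) / (d + 2 * α) < θ ∧ θ < d / ((d + 2 * α) * q) :=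
    exists_between (by
      rw [div_lt_div_iff₀ (by linarith) (by positivity)]
      nlinarith [mul_lt_mul_of_pos_left hgap (by linarith : 0 < d + 2 * α)])
  have hβ : (1 - θ) * (-d / (2 * α)) + θ + 1 = (θ * (d + 2 * α) - (d - 2 * α)) / (2 * α) := by
    field_simp
    ring
  refine ⟨θ, le_trans (div_nonneg (by linarith) (by linarith)) hθ_lo.le,
    hθ_hi.le.trans ((div_le_one (by positivity)).2 (by nlinarith)), ?_, ?_⟩
  · rw [div_lt_iff₀ (by linarith)] at hθ_lo
    linarith [div_pos (by linarith : 0 < θ * (d + 2 * α) - (d - 2 * α)) (by linarith : 0 < 2 * α)]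
  · rw [lt_div_iff₀ (by positivity)] at hθ_hi
    linarith

theorem stmt_8_general (d : ℕ) (hd : 2 ≤ d) (α : ℝ) (hα : α ∈ Set.Ioo (0:ℝ) 1)
    (D : Set (EuclideanSpace ℝ (Fin d))) (hD_meas : MeasurableSet D)
    (hD_bdd : Bornology.IsBounded D)
    (chat : ℝ)
    (p : ℝ → EuclideanSpace ℝ (Fin d) → EuclideanSpace ℝ (Fin d) → ℝ)
    (hp_bound : ∀ t x y, 0 < t → x ∈ D → y ∈ D →
      ENNReal.ofReal (p t x y) ≤ ENNReal.ofReal chat *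
        min (ENNReal.ofReal t ^ (-(d:ℝ) / (2 * α)))
            (ENNReal.ofReal t * (‖x - y‖₊ : ℝ≥0∞) ^ (-((d:ℝ) + 2 * α)))) :
    ∀ q : ℝ, 1 ≤ q → q < ((d:ℝ) + 2 * α) / (d:ℝ) → ∀ T : ℝ, 0 < T →
      (⨆ x ∈ D, ∫⁻ t in Set.Ioo (0:ℝ) T,
          (∫⁻ y in D, ENNReal.ofReal (p t x y) ^ q) ^ (1 / q)) < ⊤ := by
  intro q hq hqd T hT
  have hd₂ : (2 : ℝ) ≤ d := by exact_mod_cast hd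
  have hq₀ : 0 < q := by linarith
  obtain ⟨θ, hθ₀, hθ₁, hβ, hr⟩ := exists_interpolation_exponent hα.1 (by linarith [hα.2]) hq
    ((lt_div_iff₀ (by linarith)).1 hqd)
  obtain ⟨C, hC, hCD⟩ := exists_setLIntegral_enorm_sub_rpow_le (μ := volume) (by simp; omega)
    (by rwa [finrank_euclideanSpace_fin]) hD_bdd
  have hB : ENNReal.ofReal chat * C ^ (1 / q) < ⊤ :=
    mul_lt_top ofReal_lt_top (rpow_lt_top_of_nonneg (by positivity) hC.ne)
  calc (⨆ x ∈ D, ∫⁻ t in Set.Ioo (0:ℝ) T, (∫⁻ y in D, ENNReal.ofReal (p t x y) ^ q) ^ (1 / q))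
      ≤ ENNReal.ofReal chat * C ^ (1 / q) *
          ∫⁻ t in Set.Ioo 0 T, ENNReal.ofReal t ^ ((1 - θ) * (-(d:ℝ) / (2 * α)) + θ) := by
        refine iSup₂_le fun x hx ↦ ?_
        rw [← lintegral_const_mul' _ _ hB.ne]
        exact setLIntegral_mono' measurableSet_Ioo fun t ht ↦
          lintegral_rpow_one_div_le_of_le_min hD_meas ofReal_ne_top
            (ENNReal.ofReal_pos.2 ht.1).ne' ofReal_ne_top hθ₀ hθ₁ hq₀
            (hp_bound t x · ht.1 hx) (hCD x hx)
    _ < ⊤ := mul_lt_top hB (setLIntegral_Ioo_ofReal_rpow_lt_top hβ hT)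

/-- If a kernel `p` on `(0,∞) × D × D` satisfies the α-stable heat-kernel upper bound
`p(t,x,y) ≤ ĉ min{t^{-d/(2α)}, t |x-y|^{-(d+2α)}}`, then for every `q ∈ [1, (d+2α)/d)` and
`T > 0`, the quantity `sup_{x ∈ D} ∫₀ᵀ ‖p(t,x,·)‖_{L^q(D)} dt` is finite. -/
theorem stmt_8 (d : ℕ) (hd : 2 ≤ d) (α : ℝ) (hα : α ∈ Set.Ioo (0:ℝ) 1)
    (D : Set (EuclideanSpace ℝ (Fin d))) (hD_meas : MeasurableSet D)
    (hD_bdd : Bornology.IsBounded D)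
    (chat : ℝ) (hchat : 0 < chat)
    (p : ℝ → EuclideanSpace ℝ (Fin d) → EuclideanSpace ℝ (Fin d) → ℝ)
    (hp_meas : Measurable
      (fun z : ℝ × EuclideanSpace ℝ (Fin d) × EuclideanSpace ℝ (Fin d) => p z.1 z.2.1 z.2.2))
    (hp_nonneg : ∀ t x y, 0 < t → x ∈ D → y ∈ D → 0 ≤ p t x y)
    (hp_bound : ∀ t x y, 0 < t → x ∈ D → y ∈ D →
      ENNReal.ofReal (p t x y) ≤ ENNReal.ofReal chat *
        min (ENNReal.ofReal t ^ (-(d:ℝ) / (2 * α)))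
            (ENNReal.ofReal t * (‖x - y‖₊ : ℝ≥0∞) ^ (-((d:ℝ) + 2 * α)))) :
    ∀ q : ℝ, 1 ≤ q → q < ((d:ℝ) + 2 * α) / (d:ℝ) → ∀ T : ℝ, 0 < T →
      (⨆ x ∈ D, ∫⁻ t in Set.Ioo (0:ℝ) T,
          (∫⁻ y in D, ENNReal.ofReal (p t x y) ^ q) ^ (1 / q)) < ⊤ :=
  stmt_8_general d hd α hα D hD_meas hD_bdd chat p hp_bound
end
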